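/- Let u : ℝ → ℝ, x ∈ ℝ, C > 0, m a positive integer, γ > 0, l > 0 and a₊, a₋ ∈ ℝ with γ = a₊ − a₋. Assume: (i) |u(x + h) − u(x)| ≤ C(1 + |h|^m)|h| for all h; (ii) |u(x+h) − u(x) − a₊h| ≤ (γ/4)h for h ∈ [0, l]; (iii) |u(x+h) − u(x) − a₋h| ≤ −(γ/4)h for h ∈ [−l, 0]. Then for every h ∈ ℝ: u(x + h) − u(x) ≥ (γ/4)·|h| + (1/2)·(γ + 2a₋)·h − 2C·(1 + |h|^m)·|h|³/l². -/
import Mathlib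


set_option maxHeartbeats 1600000 in
theorem stmt_19 (u : ℝ → ℝ) (x C : ℝ) (m : ℕ) (hm : 0 < m) (γ l aplus aminus : ℝ)
    (hC : 0 < C) (hγ : 0 < γ) (hl : 0 < l) (hγdef : γ = aplus - aminus)
    (hgrowth : ∀ h : ℝ, |u (x + h) - u x| ≤ C * (1 + |h| ^ m) * |h|)
    (hplus : ∀ h ∈ Set.Icc (0 : ℝ) l, |u (x + h) - u x - aplus * h| ≤ γ / 4 * h)
    (hminus : ∀ h ∈ Set.Icc (-l) (0 : ℝ), |u (x + h) - u x - aminus * h| ≤ -(γ / 4 * h)) :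
    ∀ h : ℝ,
      u (x + h) - u x ≥
        γ / 4 * |h| + (1 / 2) * (γ + 2 * aminus) * h
          - 2 * C * (1 + |h| ^ m) * |h| ^ 3 / l ^ 2 := by
  subst hγdef
  intro h
  have hl2 : (0:ℝ) < l ^ 2 := by positivity
  have hEnn : (0:ℝ) ≤ C * (1 + |h| ^ m) := by positivity
  have hcube : (0:ℝ) ≤ 2 * C * (1 + |h| ^ m) * |h| ^ 3 / l ^ 2 := by positivity
  by_cases hcase : |h| ≤ l
  · rcases le_or_gt 0 h with hh | hh
    · have habs : |h| = h := abs_of_nonneg hh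
      have := hplus h ⟨hh, habs ▸ hcase⟩
      rw [abs_le] at this
      rw [habs] at hcube ⊢
      nlinarith [this.1, hcube]
    · have habs : |h| = -h := abs_of_neg hh
      have hmem : h ∈ Set.Icc (-l) (0:ℝ) := ⟨by linarith [habs ▸ hcase], hh.le⟩
      have := hminus h hmem
      rw [abs_le] at this
      rw [habs] at hcube ⊢
      nlinarith [this.1, hcube]
  · push_neg at hcase
    have hgl : |u (x + l) - u x| ≤ C * (1 + l ^ m) * l := by
      have := hgrowth l
      rwa [abs_of_pos hl] at this
    have hgml : |u (x + -l) - u x| ≤ C * (1 + l ^ m) * l := by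
      have := hgrowth (-l)
      rwa [abs_neg, abs_of_pos hl] at this
    have hpl := hplus l ⟨hl.le, le_refl l⟩
    have hml := hminus (-l) ⟨le_refl _, by linarith⟩
    rw [abs_le] at hpl hml hgl hgml
    have hap' : aplus ≤ C * (1 + l ^ m) + (aplus - aminus) / 4 := by
      nlinarith [hpl.1, hgl.2]
    have ham' : aminus ≥ -(C * (1 + l ^ m)) - (aplus - aminus) / 4 := by
      nlinarith [hml.2, hgml.1]
    have hg := hgrowth h
    rw [abs_le] at hg
    have hD : C * (1 + l ^ m) ≤ C * (1 + |h| ^ m) := by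
      have : l ^ m ≤ |h| ^ m := pow_le_pow_left₀ hl.le hcase.le m
      nlinarith
    have hsq : l ^ 2 ≤ |h| ^ 2 := by nlinarith [abs_nonneg h]
    have habsn : 0 ≤ |h| := abs_nonneg h
    have key : 2 * (C * (1 + |h| ^ m)) * |h| ≤ 2 * C * (1 + |h| ^ m) * |h| ^ 3 / l ^ 2 := by
      rw [le_div_iff₀ hl2]
      nlinarith [mul_nonneg hEnn habsn, mul_nonneg (mul_nonneg hEnn habsn) (sub_nonneg.2 hsq)]
    set c := 2 * C * (1 + |h| ^ m) * |h| ^ 3 / l ^ 2 with hc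
    set E := C * (1 + |h| ^ m) with hE
    set D := C * (1 + l ^ m) with hDdef
    rcases le_or_gt 0 h with hh | hh
    · have habs : |h| = h := abs_of_nonneg hh
      rw [habs] at hg ⊢
      have q : (3 * aplus + aminus) / 4 ≤ D := by linarith
      have p1 := mul_le_mul_of_nonneg_right q hh
      have p2 := mul_le_mul_of_nonneg_right hD hh
      have key' : 2 * E * h ≤ c := by rw [habs] at key; linarith [key]
      linarith [hg.1, key', p1, p2]
    · have habs : |h| = -h := abs_of_neg hh
      have hnh : (0:ℝ) ≤ -h := by linarith
      rw [habs] at hg ⊢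
      have q : -(aplus + 3 * aminus) / 4 ≤ D := by linarith
      have p1 := mul_le_mul_of_nonneg_right q hnh
      have p2 := mul_le_mul_of_nonneg_right hD hnh
      have key' : 2 * E * (-h) ≤ c := by rw [habs] at key; linarith [key]
      linarith [hg.1, key', p1, p2]
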